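/- Let 𝒢 be a snake graph and let P_− and P_+ be its two perfect matchings consisting only of boundary edges. Then P_− and P_+ are disjoint and P_− ∪ P_+ is exactly the set of all boundary edges of 𝒢. -/

import Mathlib

/-!
Basic definitions: tiles, snake graphs, perfect matchings, sign functions.

A tile is a unit square in the plane, identified by the coordinates of its
south-west corner.  An edge of the integer grid is encoded as a pair
`(p, b) : (ℤ × ℤ) × Bool` where `b = true` means the horizontal edge from `p`
to `p + (1,0)` and `b = false` means the vertical edge from `p` to `p + (0,1)`.

A snake graph is a sequence of tiles `G_1, …, G_d` (`d ≥ 1`) in which each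
tile `G_{i+1}` is either the tile directly to the east or directly to the
north of `G_i`; this is exactly the combinatorial content of conditions
(i)–(iii) in the definition of a snake graph.  We record the position of the
first tile and the sequence of steps (`true` = east, `false` = north).
-/

abbrev Pt : Type := ℤ × ℤ

/-- An edge of the integer grid: `(p, true)` is the horizontal unit edge with left
endpoint `p`, and `(p, false)` is the vertical unit edge with bottom endpoint `p`. -/
abbrev Edge : Type := Pt × Bool

/-- The two endpoints of an edge. -/
def Edge.ends (e : Edge) : Finset Pt :=
  {e.1, e.1 + (if e.2 then ((1 : ℤ), (0 : ℤ)) else ((0 : ℤ), (1 : ℤ)))}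

/-- The south edge of the tile with south-west corner `p`. -/
def southEdge (p : Pt) : Edge := (p, true)
/-- The north edge of the tile with south-west corner `p`. -/
def northEdge (p : Pt) : Edge := (p + ((0 : ℤ), (1 : ℤ)), true)
/-- The west edge of the tile with south-west corner `p`. -/
def westEdge (p : Pt) : Edge := (p, false)
/-- The east edge of the tile with south-west corner `p`. -/
def eastEdge (p : Pt) : Edge := (p + ((1 : ℤ), (0 : ℤ)), false)

/-- The four edges of the tile with south-west corner `p`. -/
def tileEdges (p : Pt) : Finset Edge := {southEdge p, northEdge p, westEdge p, eastEdge p}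

/-- The four vertices of the tile with south-west corner `p`. -/
def tileVerts (p : Pt) : Finset Pt :=
  {p, p + ((1 : ℤ), (0 : ℤ)), p + ((0 : ℤ), (1 : ℤ)), p + ((1 : ℤ), (1 : ℤ))}

/-- A snake graph `𝒢 = (G_1, …, G_d)`, `d ≥ 1`: a sequence of tiles in which each
tile `G_{i+1}` shares exactly one edge with `G_i`, this edge being the north edge of
`G_i` and the south edge of `G_{i+1}`, or the east edge of `G_i` and the west edge of
`G_{i+1}`.  `step i = true` means `G_{i+1}` is east of `G_i`, `step i = false` means
`G_{i+1}` is north of `G_i`; only the values `step i` for `1 ≤ i ≤ d - 1` are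
relevant. -/
structure SnakeGraph where
  d : ℕ
  one_le_d : 1 ≤ d
  base : Pt
  step : ℕ → Bool

namespace SnakeGraph

/-- The south-west corner of the `i`-th tile, `1 ≤ i ≤ d`. -/
def pos (G : SnakeGraph) (i : ℕ) : Pt :=
  G.base + ∑ j ∈ Finset.Ico 1 i,
    (if G.step j then ((1 : ℤ), (0 : ℤ)) else ((0 : ℤ), (1 : ℤ)))

/-- The set of edges of the snake graph. -/
def edges (G : SnakeGraph) : Finset Edge :=
  (Finset.Icc 1 G.d).biUnion fun i => tileEdges (G.pos i)

/-- The set of vertices of the snake graph. -/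
def verts (G : SnakeGraph) : Finset Pt :=
  (Finset.Icc 1 G.d).biUnion fun i => tileVerts (G.pos i)

/-- The interior edge `e_i` shared by the tiles `G_i` and `G_{i+1}` (`1 ≤ i ≤ d-1`). -/
def intEdge (G : SnakeGraph) (i : ℕ) : Edge :=
  if G.step i then eastEdge (G.pos i) else northEdge (G.pos i)

/-- An edge is interior if it is one of the edges `e_1, …, e_{d-1}`. -/
def IsInteriorEdge (G : SnakeGraph) (e : Edge) : Prop :=
  ∃ i, 1 ≤ i ∧ i < G.d ∧ e = G.intEdge i

/-- A boundary edge is an edge of the snake graph which is not interior. -/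
def IsBoundaryEdge (G : SnakeGraph) (e : Edge) : Prop :=
  e ∈ G.edges ∧ ¬ G.IsInteriorEdge e

/-- A perfect matching of the snake graph: a set of edges of `G` such that every
vertex of `G` is incident to exactly one edge of the set. -/
def IsPerfectMatching (G : SnakeGraph) (P : Finset Edge) : Prop :=
  (∀ e ∈ P, e ∈ G.edges) ∧ ∀ v ∈ G.verts, ∃! e, e ∈ P ∧ v ∈ Edge.ends e

/-- A sign function on the snake graph: on every tile the north and west edges have
the same sign, the south and east edges have the same sign, and the signs of the
north and south edges are opposite.  (Signs are encoded as `Bool`.) -/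
def IsSignFunction (G : SnakeGraph) (f : Edge → Bool) : Prop :=
  ∀ i, 1 ≤ i → i ≤ G.d →
    f (northEdge (G.pos i)) = f (westEdge (G.pos i)) ∧
    f (southEdge (G.pos i)) = f (eastEdge (G.pos i)) ∧
    f (northEdge (G.pos i)) = ! f (southEdge (G.pos i))

end SnakeGraph

/-!
Induct on the number of tiles, removing the last one. Its two new corners lie only on its
exit edge and its two sides, so a boundary matching contains either the exit edge or both sides;
trading the sides for the entry edge (interior before, boundary after the removal) restricts it
to a boundary matching of the shorter snake graph, and the restriction remembers which case
occurred. Hence whether two boundary matchings agree on a boundary edge does not depend on the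
edge: distinct ones disagree on every boundary edge, i.e. they partition the boundary.
-/

open Finset

def stepVec (s : Bool) : Pt := if s then ((1 : ℤ), (0 : ℤ)) else ((0 : ℤ), (1 : ℤ))

lemma not_add_stepVec_le (p : Pt) (s : Bool) : ¬ p + stepVec s ≤ p := by
  cases s <;> simp [stepVec, Prod.le_def]

/- The tile with south-west corner `q`, entered by a step in direction `s` (as in
`SnakeGraph.step`) across `entryEdge q s` and left across the opposite `exitEdge q s`, whose
ends are the corners `q + stepVec s` and `q + (1, 1)`; `swSide` and `neSide` are its sides
through `q` and `q + (1, 1)`. -/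
def entryEdge (q : Pt) (s : Bool) : Edge := if s then westEdge q else southEdge q
def exitEdge (q : Pt) (s : Bool) : Edge := if s then eastEdge q else northEdge q
def swSide (q : Pt) (s : Bool) : Edge := if s then southEdge q else westEdge q
def neSide (q : Pt) (s : Bool) : Edge := if s then northEdge q else eastEdge q

section Tile

variable (q v : Pt) (s : Bool)

lemma mem_tileEdges_iff {e : Edge} :
    e ∈ tileEdges q ↔
      e = entryEdge q s ∨ e = swSide q s ∨ e = neSide q s ∨ e = exitEdge q s := by
  cases s <;> simp [tileEdges, entryEdge, swSide, neSide, exitEdge] <;> tauto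

lemma entryEdge_mem_tileEdges : entryEdge q s ∈ tileEdges q :=
  (mem_tileEdges_iff q s).2 (Or.inl rfl)

lemma swSide_mem_tileEdges : swSide q s ∈ tileEdges q :=
  (mem_tileEdges_iff q s).2 (Or.inr (Or.inl rfl))

lemma neSide_mem_tileEdges : neSide q s ∈ tileEdges q :=
  (mem_tileEdges_iff q s).2 (Or.inr (Or.inr (Or.inl rfl)))

lemma exitEdge_mem_tileEdges : exitEdge q s ∈ tileEdges q :=
  (mem_tileEdges_iff q s).2 (Or.inr (Or.inr (Or.inr rfl)))

lemma ends_subset_tileVerts {e : Edge} (he : e ∈ tileEdges q) : e.ends ⊆ tileVerts q := by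
  intro v hv
  simp only [tileEdges, mem_insert, mem_singleton] at he
  rcases he with rfl | rfl | rfl | rfl <;>
    simp [Edge.ends, tileVerts, southEdge, northEdge, westEdge, eastEdge, Prod.ext_iff]
      at hv ⊢ <;>
    omega

lemma swSide_ne_exitEdge : swSide q s ≠ exitEdge q s := by
  cases s <;> simp [swSide, exitEdge, southEdge, westEdge, eastEdge, northEdge, Prod.ext_iff]

lemma neSide_ne_exitEdge : neSide q s ≠ exitEdge q s := by
  cases s <;> simp [neSide, exitEdge, northEdge, eastEdge, Prod.ext_iff]

lemma swCorner_mem_ends_swSide : q + stepVec s ∈ (swSide q s).ends := by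
  cases s <;> simp [swSide, stepVec, Edge.ends, southEdge, westEdge]

lemma swCorner_mem_ends_exitEdge : q + stepVec s ∈ (exitEdge q s).ends := by
  cases s <;> simp [exitEdge, stepVec, Edge.ends, eastEdge, northEdge]

lemma neCorner_mem_ends_neSide : q + (1, 1) ∈ (neSide q s).ends := by
  cases s <;> simp [neSide, Edge.ends, northEdge, eastEdge, Prod.ext_iff]

lemma neCorner_mem_ends_exitEdge : q + (1, 1) ∈ (exitEdge q s).ends := by
  cases s <;> simp [exitEdge, Edge.ends, northEdge, eastEdge, Prod.ext_iff]

lemma eq_or_eq_of_mem_ends_exitEdge (h : v ∈ (exitEdge q s).ends) :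
    v = q + stepVec s ∨ v = q + (1, 1) := by
  cases s <;> simp [exitEdge, stepVec, Edge.ends, northEdge, eastEdge, Prod.ext_iff] at h ⊢ <;>
    omega

lemma mem_ends_sides_of_mem_ends_entryEdge (h : v ∈ (entryEdge q s).ends) :
    v ∈ (swSide q s).ends ∨ v ∈ (neSide q s).ends := by
  cases s <;>
    simp [entryEdge, swSide, neSide, Edge.ends, southEdge, northEdge, westEdge, eastEdge,
      Prod.ext_iff] at h ⊢ <;> omega

lemma mem_ends_entryEdge_of_mem_tileVerts (h : v ∈ tileVerts q) :
    v ∈ (entryEdge q s).ends ∨ v = q + stepVec s ∨ v = q + (1, 1) := by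
  cases s <;>
    simp [entryEdge, stepVec, tileVerts, Edge.ends, southEdge, westEdge, Prod.ext_iff] at h ⊢ <;>
    omega

lemma eq_swSide_or_eq_exitEdge {e : Edge} (he : e ∈ tileEdges q) (h : q + stepVec s ∈ e.ends) :
    e = swSide q s ∨ e = exitEdge q s := by
  simp only [tileEdges, mem_insert, mem_singleton] at he
  cases s <;> rcases he with rfl | rfl | rfl | rfl <;>
    simp_all [swSide, exitEdge, stepVec, Edge.ends, southEdge, northEdge, westEdge, eastEdge,
      Prod.ext_iff]

lemma eq_neSide_or_eq_exitEdge {e : Edge} (he : e ∈ tileEdges q) (h : q + (1, 1) ∈ e.ends) :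
    e = neSide q s ∨ e = exitEdge q s := by
  simp only [tileEdges, mem_insert, mem_singleton] at he
  cases s <;> rcases he with rfl | rfl | rfl | rfl <;>
    simp_all [neSide, exitEdge, Edge.ends, southEdge, northEdge, westEdge, eastEdge,
      Prod.ext_iff]

end Tile

lemma mem_iff_notMem_of_existsUnique {P : Finset Edge} {v : Pt} {a b : Edge} (hab : a ≠ b)
    (hv : ∃! e, e ∈ P ∧ v ∈ e.ends) (ha : v ∈ a.ends) (hb : v ∈ b.ends)
    (hP : ∀ e ∈ P, v ∈ e.ends → e = a ∨ e = b) :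
    a ∈ P ↔ b ∉ P := by
  obtain ⟨e, ⟨heP, hve⟩, huniq⟩ := hv
  constructor
  · exact fun haP hbP => hab ((huniq a ⟨haP, ha⟩).trans (huniq b ⟨hbP, hb⟩).symm)
  · intro hbP
    rcases hP e heP hve with rfl | rfl
    exacts [heP, absurd heP hbP]

lemma swSide_mem_iff_and_neSide_mem_iff {P : Finset Edge} {q : Pt} (s : Bool)
    (hP : ∀ e ∈ P, e ∈ tileEdges q ∨ (q + stepVec s ∉ e.ends ∧ q + (1, 1) ∉ e.ends))
    (hsw : ∃! e, e ∈ P ∧ q + stepVec s ∈ e.ends)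
    (hne : ∃! e, e ∈ P ∧ q + (1, 1) ∈ e.ends) :
    (swSide q s ∈ P ↔ exitEdge q s ∉ P) ∧ (neSide q s ∈ P ↔ exitEdge q s ∉ P) := by
  refine ⟨mem_iff_notMem_of_existsUnique (swSide_ne_exitEdge q s) hsw
      (swCorner_mem_ends_swSide q s) (swCorner_mem_ends_exitEdge q s) fun e he hv => ?_,
    mem_iff_notMem_of_existsUnique (neSide_ne_exitEdge q s) hne
      (neCorner_mem_ends_neSide q s) (neCorner_mem_ends_exitEdge q s) fun e he hv => ?_⟩
  · exact eq_swSide_or_eq_exitEdge q s ((hP e he).resolve_right fun h => h.1 hv) hv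
  · exact eq_neSide_or_eq_exitEdge q s ((hP e he).resolve_right fun h => h.2 hv) hv

namespace SnakeGraph

variable (G : SnakeGraph)

lemma pos_succ {i : ℕ} (hi : 1 ≤ i) : G.pos (i + 1) = G.pos i + stepVec (G.step i) := by
  rw [pos, pos, sum_Ico_succ_top hi, ← add_assoc]
  rfl

lemma monotone_pos_succ : Monotone fun i => G.pos (i + 1) :=
  monotone_nat_of_le_succ fun i => by
    rw [G.pos_succ (Nat.le_add_left 1 i)]
    exact le_add_of_nonneg_right (by cases G.step (i + 1) <;> decide)

lemma pos_le_pos {i j : ℕ} (hi : 1 ≤ i) (hij : i ≤ j) : G.pos i ≤ G.pos j := by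
  obtain ⟨i, rfl⟩ := Nat.exists_eq_add_of_le' hi
  obtain ⟨j, rfl⟩ := Nat.exists_eq_add_of_le' (hi.trans hij)
  exact G.monotone_pos_succ (by omega)

lemma intEdge_fst (i : ℕ) : (G.intEdge i).1 = G.pos i + stepVec (G.step i) := by
  unfold intEdge stepVec
  cases G.step i <;> rfl

lemma intEdge_mem_tileEdges (i : ℕ) : G.intEdge i ∈ tileEdges (G.pos i) := by
  unfold intEdge
  cases G.step i <;> simp [tileEdges]

lemma entryEdge_pos_succ {i : ℕ} (hi : 1 ≤ i) :
    entryEdge (G.pos (i + 1)) (G.step i) = G.intEdge i := by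
  rw [G.pos_succ hi]
  unfold entryEdge intEdge stepVec
  cases G.step i <;> rfl

lemma ends_subset_verts {e : Edge} (he : e ∈ G.edges) : e.ends ⊆ G.verts := by
  simp only [edges, mem_biUnion] at he
  obtain ⟨i, hi, he⟩ := he
  exact (ends_subset_tileVerts _ he).trans
    (subset_biUnion_of_mem (fun i => tileVerts (G.pos i)) hi)

def take (n : ℕ) (hn : 1 ≤ n) : SnakeGraph := ⟨n, hn, G.base, G.step⟩

@[simp] lemma take_d {n : ℕ} (hn : 1 ≤ n) : (G.take n hn).d = n := rfl
@[simp] lemma pos_take {n : ℕ} (hn : 1 ≤ n) : (G.take n hn).pos = G.pos := rfl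
@[simp] lemma intEdge_take {n : ℕ} (hn : 1 ≤ n) : (G.take n hn).intEdge = G.intEdge := rfl

lemma le_of_mem_verts_take {n : ℕ} (hn : 1 ≤ n) {v : Pt} (hv : v ∈ (G.take n hn).verts) :
    v ≤ G.pos n + (1, 1) := by
  simp only [verts, mem_biUnion, mem_Icc, take_d, pos_take] at hv
  obtain ⟨i, ⟨hi, hin⟩, hv⟩ := hv
  calc v ≤ G.pos i + (1, 1) := by
        simp only [tileVerts, mem_insert, mem_singleton] at hv
        rcases hv with rfl | rfl | rfl | rfl <;> simp [Prod.le_def]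
    _ ≤ G.pos n + (1, 1) := add_le_add_left (G.pos_le_pos hi hin) _

structure IsTileExtension (G G' : SnakeGraph) (q : Pt) (s : Bool) : Prop where
  edges_eq : G.edges = tileEdges q ∪ G'.edges
  verts_eq : G.verts = tileVerts q ∪ G'.verts
  swCorner_notMem : q + stepVec s ∉ G'.verts
  neCorner_notMem : q + (1, 1) ∉ G'.verts
  isBoundaryEdge_entryEdge : G'.IsBoundaryEdge (entryEdge q s)
  isInteriorEdge_entryEdge : G.IsInteriorEdge (entryEdge q s)
  isInteriorEdge_of_isInteriorEdge : ∀ e, G'.IsInteriorEdge e → G.IsInteriorEdge e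

lemma isTileExtension_take {n : ℕ} (hn : 1 ≤ n) (hd : G.d = n + 1) :
    IsTileExtension G (G.take n hn) (G.pos (n + 1)) (G.step n) where
  edges_eq := by
    rw [edges, hd, ← insert_Icc_right_eq_Icc_add_one (by omega), biUnion_insert]
    rfl
  verts_eq := by
    rw [verts, hd, ← insert_Icc_right_eq_Icc_add_one (by omega), biUnion_insert]
    rfl
  swCorner_notMem h := by
    have := G.le_of_mem_verts_take hn h
    rw [G.pos_succ hn, add_assoc, add_le_add_iff_left] at this
    generalize G.step n = s at this
    cases s <;> simp [stepVec, Prod.le_def] at this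
  neCorner_notMem h := by
    have := G.le_of_mem_verts_take hn h
    rw [G.pos_succ hn, add_right_comm] at this
    exact not_add_stepVec_le _ _ this
  isBoundaryEdge_entryEdge := by
    rw [G.entryEdge_pos_succ hn]
    refine ⟨mem_biUnion.2 ⟨n, by simp [hn], G.intEdge_mem_tileEdges n⟩, ?_⟩
    rintro ⟨i, hi, hin, he⟩
    simp only [take_d, intEdge_take] at hin he
    have hle : (G.intEdge i).1 ≤ G.pos n := by
      rw [intEdge_fst, ← G.pos_succ hi]
      exact G.pos_le_pos (by omega) hin
    rw [← he, intEdge_fst] at hle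
    exact not_add_stepVec_le _ _ hle
  isInteriorEdge_entryEdge := ⟨n, hn, by omega, G.entryEdge_pos_succ hn⟩
  isInteriorEdge_of_isInteriorEdge := by
    rintro e ⟨i, hi, hin, he⟩
    exact ⟨i, hi, by rw [take_d] at hin; omega, he⟩

end SnakeGraph

/-- If `P` avoids the exit edge it contains both sides, and the entry edge takes over their old
corners. -/
def removeTile (P : Finset Edge) (q : Pt) (s : Bool) : Finset Edge :=
  if exitEdge q s ∈ P then P \ tileEdges q else insert (entryEdge q s) (P \ tileEdges q)

lemma mem_removeTile {P : Finset Edge} {q : Pt} {s : Bool} {e : Edge} :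
    e ∈ removeTile P q s ↔
      e ∈ P ∧ e ∉ tileEdges q ∨ e = entryEdge q s ∧ exitEdge q s ∉ P := by
  unfold removeTile
  split_ifs with h <;> simp [h, or_comm]

lemma mem_removeTile_of_notMem_tileEdges {P : Finset Edge} {q : Pt} {s : Bool} {e : Edge}
    (he : e ∉ tileEdges q) : e ∈ removeTile P q s ↔ e ∈ P := by
  have : e ≠ entryEdge q s := fun h => he (h ▸ entryEdge_mem_tileEdges q s)
  simp [mem_removeTile, he, this]

lemma entryEdge_mem_removeTile_iff {P : Finset Edge} {q : Pt} {s : Bool} :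
    entryEdge q s ∈ removeTile P q s ↔ exitEdge q s ∉ P := by
  simp [mem_removeTile, entryEdge_mem_tileEdges]

namespace SnakeGraph

def IsBoundaryMatching (G : SnakeGraph) (P : Finset Edge) : Prop :=
  G.IsPerfectMatching P ∧ ∀ e ∈ P, G.IsBoundaryEdge e

def BoundaryAgreementConstant (G : SnakeGraph) (P Q : Finset Edge) : Prop :=
  ∃ c : Prop, ∀ e, G.IsBoundaryEdge e → ((e ∈ P ↔ e ∈ Q) ↔ c)

namespace IsTileExtension

variable {G G' : SnakeGraph} {q : Pt} {s : Bool} (hT : IsTileExtension G G' q s)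
  {P : Finset Edge} (hP : G.IsBoundaryMatching P)
include hT

lemma isBoundaryEdge_of_notMem_tileEdges {e : Edge} (he : G.IsBoundaryEdge e)
    (het : e ∉ tileEdges q) : G'.IsBoundaryEdge e := by
  have heG := he.1
  rw [hT.edges_eq, mem_union] at heG
  exact ⟨heG.resolve_left het, fun h => he.2 (hT.isInteriorEdge_of_isInteriorEdge e h)⟩

lemma mem_ends_entryEdge {v : Pt} (hv : v ∈ G'.verts) (hvt : v ∈ tileVerts q) :
    v ∈ (entryEdge q s).ends := by
  rcases mem_ends_entryEdge_of_mem_tileVerts q v s hvt with h | rfl | rfl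
  exacts [h, absurd hv hT.swCorner_notMem, absurd hv hT.neCorner_notMem]

lemma notMem_ends_exitEdge {v : Pt} (hv : v ∈ G'.verts) : v ∉ (exitEdge q s).ends := by
  intro h
  rcases eq_or_eq_of_mem_ends_exitEdge q v s h with rfl | rfl
  exacts [hT.swCorner_notMem hv, hT.neCorner_notMem hv]

include hP

lemma entryEdge_notMem : entryEdge q s ∉ P :=
  fun h => (hP.2 _ h).2 hT.isInteriorEdge_entryEdge

lemma sides_mem_iff :
    (swSide q s ∈ P ↔ exitEdge q s ∉ P) ∧ (neSide q s ∈ P ↔ exitEdge q s ∉ P) := by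
  have hcorner : ∀ v ∈ (exitEdge q s).ends, ∃! e, e ∈ P ∧ v ∈ e.ends := fun v hv =>
    hP.1.2 v (hT.verts_eq ▸ mem_union_left _
      (ends_subset_tileVerts q (exitEdge_mem_tileEdges q s) hv))
  refine swSide_mem_iff_and_neSide_mem_iff s (fun e he => ?_)
    (hcorner _ (swCorner_mem_ends_exitEdge q s)) (hcorner _ (neCorner_mem_ends_exitEdge q s))
  have heG := hP.1.1 e he
  rw [hT.edges_eq, mem_union] at heG
  refine heG.imp_right fun heG' => ⟨fun h => ?_, fun h => ?_⟩
  exacts [hT.swCorner_notMem (G'.ends_subset_verts heG' h),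
    hT.neCorner_notMem (G'.ends_subset_verts heG' h)]

lemma mem_iff_of_mem_tileEdges {e : Edge} (het : e ∈ tileEdges q) (hne : e ≠ entryEdge q s) :
    e ∈ P ↔ (e = exitEdge q s ↔ exitEdge q s ∈ P) := by
  obtain ⟨hsw, hneSide⟩ := hT.sides_mem_iff hP
  rcases (mem_tileEdges_iff q s).1 het with rfl | rfl | rfl | rfl
  · exact absurd rfl hne
  · simp [hsw, swSide_ne_exitEdge]
  · simp [hneSide, neSide_ne_exitEdge]
  · simp

lemma existsUnique_mem_removeTile {v : Pt} (hv : v ∈ G'.verts) :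
    ∃! e, e ∈ removeTile P q s ∧ v ∈ e.ends := by
  obtain ⟨e, ⟨heP, hve⟩, huniq⟩ := hP.1.2 v (hT.verts_eq ▸ mem_union_right _ hv)
  by_cases hcase : exitEdge q s ∉ P ∧ v ∈ (entryEdge q s).ends
  · obtain ⟨hexit, hventry⟩ := hcase
    refine ⟨entryEdge q s, ⟨entryEdge_mem_removeTile_iff.2 hexit, hventry⟩, ?_⟩
    rintro f ⟨hf, hvf⟩
    rcases mem_removeTile.1 hf with ⟨hfP, hft⟩ | ⟨rfl, -⟩
    · -- both sides lie in `P`, and one of them already covers `v`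
      obtain ⟨hsw, hneSide⟩ := hT.sides_mem_iff hP
      obtain ⟨g, hgt, hgP, hvg⟩ : ∃ g ∈ tileEdges q, g ∈ P ∧ v ∈ g.ends := by
        rcases mem_ends_sides_of_mem_ends_entryEdge q v s hventry with h | h
        exacts [⟨_, swSide_mem_tileEdges q s, hsw.2 hexit, h⟩,
          ⟨_, neSide_mem_tileEdges q s, hneSide.2 hexit, h⟩]
      exact absurd ((huniq f ⟨hfP, hvf⟩).trans (huniq g ⟨hgP, hvg⟩).symm ▸ hgt) hft
    · rfl
  · have het : e ∉ tileEdges q := by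
      intro het
      have hventry := hT.mem_ends_entryEdge hv (ends_subset_tileVerts q het hve)
      have hexit : exitEdge q s ∈ P := not_not.1 fun h => hcase ⟨h, hventry⟩
      have hne : e ≠ entryEdge q s := fun h => hT.entryEdge_notMem hP (h ▸ heP)
      have : e = exitEdge q s := ((hT.mem_iff_of_mem_tileEdges hP het hne).1 heP).2 hexit
      exact hT.notMem_ends_exitEdge hv (this ▸ hve)
    refine ⟨e, ⟨(mem_removeTile_of_notMem_tileEdges het).2 heP, hve⟩, ?_⟩
    rintro f ⟨hf, hvf⟩
    rcases mem_removeTile.1 hf with ⟨hfP, -⟩ | ⟨rfl, hexit⟩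
    exacts [huniq f ⟨hfP, hvf⟩, absurd ⟨hexit, hvf⟩ hcase]

lemma isBoundaryMatching_removeTile : G'.IsBoundaryMatching (removeTile P q s) := by
  have hbdry : ∀ e ∈ removeTile P q s, G'.IsBoundaryEdge e := by
    intro e he
    rcases mem_removeTile.1 he with ⟨heP, het⟩ | ⟨rfl, -⟩
    exacts [hT.isBoundaryEdge_of_notMem_tileEdges (hP.2 e heP) het, hT.isBoundaryEdge_entryEdge]
  exact ⟨⟨fun e he => (hbdry e he).1, fun v hv => hT.existsUnique_mem_removeTile hP hv⟩,
    hbdry⟩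

lemma boundaryAgreementConstant {Q : Finset Edge} (hQ : G.IsBoundaryMatching Q)
    (h : G'.BoundaryAgreementConstant (removeTile P q s) (removeTile Q q s)) :
    G.BoundaryAgreementConstant P Q := by
  obtain ⟨c, hc⟩ := h
  refine ⟨c, fun e he => ?_⟩
  by_cases het : e ∈ tileEdges q
  · have hne : e ≠ entryEdge q s := by
      rintro rfl
      exact he.2 hT.isInteriorEdge_entryEdge
    rw [hT.mem_iff_of_mem_tileEdges hP het hne, hT.mem_iff_of_mem_tileEdges hQ het hne,
      ← hc _ hT.isBoundaryEdge_entryEdge, entryEdge_mem_removeTile_iff,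
      entryEdge_mem_removeTile_iff]
    tauto
  · rw [← mem_removeTile_of_notMem_tileEdges (P := P) (s := s) het,
      ← mem_removeTile_of_notMem_tileEdges (P := Q) (s := s) het]
    exact hc e (hT.isBoundaryEdge_of_notMem_tileEdges he het)

end IsTileExtension

lemma boundaryAgreementConstant_of_d_eq_one {G : SnakeGraph} (hd : G.d = 1)
    {P Q : Finset Edge} (hP : G.IsBoundaryMatching P) (hQ : G.IsBoundaryMatching Q) :
    G.BoundaryAgreementConstant P Q := by
  set q := G.base
  have hedges : G.edges = tileEdges q := by simp [edges, hd, pos, q]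
  have hverts : G.verts = tileVerts q := by simp [verts, hd, pos, q]
  have hmem : ∀ P, G.IsBoundaryMatching P → ∀ e ∈ tileEdges q,
      (e ∈ P ↔ (e = westEdge q ∨ e = eastEdge q ↔ eastEdge q ∈ P)) := by
    intro P hP
    have hsides (s : Bool) := swSide_mem_iff_and_neSide_mem_iff (q := q) (P := P) s
      (fun e he => Or.inl (hedges ▸ hP.1.1 e he))
      (hP.1.2 _ (hverts ▸ ends_subset_tileVerts q (exitEdge_mem_tileEdges q s)
        (swCorner_mem_ends_exitEdge q s)))
      (hP.1.2 _ (hverts ▸ ends_subset_tileVerts q (exitEdge_mem_tileEdges q s)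
        (neCorner_mem_ends_exitEdge q s)))
    obtain ⟨hS, hN⟩ := hsides true
    obtain ⟨hW, hE⟩ := hsides false
    simp only [swSide, neSide, exitEdge, if_true, Bool.false_eq_true, if_false] at hS hN hW hE
    intro e he
    simp only [tileEdges, mem_insert, mem_singleton] at he
    rcases he with rfl | rfl | rfl | rfl <;>
      simp [southEdge, northEdge, westEdge, eastEdge, Prod.ext_iff] at hS hN hW hE ⊢ <;> tauto
  have hbdry : ∀ e, G.IsBoundaryEdge e → e ∈ tileEdges q := fun e he => hedges ▸ he.1
  exact ⟨eastEdge q ∈ P ↔ eastEdge q ∈ Q, fun e he => by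
    rw [hmem P hP e (hbdry e he), hmem Q hQ e (hbdry e he)]
    tauto⟩

theorem boundaryAgreementConstant (G : SnakeGraph) {P Q : Finset Edge}
    (hP : G.IsBoundaryMatching P) (hQ : G.IsBoundaryMatching Q) :
    G.BoundaryAgreementConstant P Q := by
  obtain ⟨n, hn⟩ := Nat.exists_eq_add_of_le' G.one_le_d
  induction n generalizing G P Q with
  | zero => exact boundaryAgreementConstant_of_d_eq_one hn hP hQ
  | succ n ih =>
    have hT := G.isTileExtension_take (Nat.le_add_left 1 n) hn
    exact hT.boundaryAgreementConstant hP hQ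
      (ih _ (hT.isBoundaryMatching_removeTile hP) (hT.isBoundaryMatching_removeTile hQ) rfl)

end SnakeGraph

/-- Let `𝒢` be a snake graph and `P₋`, `P₊` its two perfect
matchings consisting only of boundary edges.  Then `P₋` and `P₊` are disjoint and
`P₋ ∪ P₊` is exactly the set of all boundary edges of `𝒢`. -/
theorem boundary_matchings_partition_boundary (G : SnakeGraph)
    (Pminus Pplus : Finset Edge)
    (hm : G.IsPerfectMatching Pminus) (hmb : ∀ e ∈ Pminus, G.IsBoundaryEdge e)
    (hp : G.IsPerfectMatching Pplus) (hpb : ∀ e ∈ Pplus, G.IsBoundaryEdge e)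
    (hne : Pminus ≠ Pplus) :
    Disjoint Pminus Pplus ∧ ∀ e : Edge, e ∈ Pminus ∪ Pplus ↔ G.IsBoundaryEdge e := by
  obtain ⟨c, hc⟩ := G.boundaryAgreementConstant ⟨hm, hmb⟩ ⟨hp, hpb⟩
  have hnc : ¬c := fun hagree => hne <| ext fun e =>
    ⟨fun he => ((hc e (hmb e he)).2 hagree).1 he, fun he => ((hc e (hpb e he)).2 hagree).2 he⟩
  refine ⟨disjoint_left.2 fun e hem hep => hnc ((hc e (hmb e hem)).1 (iff_of_true hem hep)),
    fun e => ⟨fun he => (mem_union.1 he).elim (hmb e) (hpb e), fun he => ?_⟩⟩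
  by_contra h
  rw [mem_union, not_or] at h
  exact hnc ((hc e he).1 (iff_of_false h.1 h.2))
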